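/- Let P be a finite connected poset and M : P → vec an interval decomposable persistence module, i.e., M ≅ ⊕_{i∈F} V_{J_i} for a finite family (J_i)_{i∈F} of intervals of P. Then for every path-connected subposet I ∈ Con(P), rk(M)(I) = #{i ∈ F : J_i ⊇ I}, i.e., the generalized rank invariant of M at I equals the number of indices i (counted with multiplicity) such that the interval J_i contains I. -/

import Mathlib

open scoped Classical
open Module

noncomputable section

/-- A pointwise finite-dimensional persistence module over a poset `P`. -/
structure PersMod (𝔽 : Type) [Field 𝔽] (P : Type) [PartialOrder P] where
  V : P → Type
  [iAdd : ∀ p, AddCommGroup (V p)]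
  [iMod : ∀ p, Module 𝔽 (V p)]
  [iFin : ∀ p, FiniteDimensional 𝔽 (V p)]
  φ : ∀ {p q : P}, p ≤ q → (V p →ₗ[𝔽] V q)
  φ_refl : ∀ p : P, φ (le_refl p) = LinearMap.id
  φ_comp : ∀ {p q r : P} (hpq : p ≤ q) (hqr : q ≤ r),
    (φ hqr).comp (φ hpq) = φ (le_trans hpq hqr)

attribute [instance] PersMod.iAdd PersMod.iMod PersMod.iFin

/-- A poset is connected if any two elements are joined by a finite zigzag of
comparable elements. -/
def ZigzagConnected (P : Type) [PartialOrder P] : Prop :=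
  ∀ p q : P, Relation.ReflTransGen (fun a b : P => a ≤ b ∨ b ≤ a) p q

section SetNotions

variable {P : Type} [PartialOrder P]

/-- Convexity of a subset of a poset. -/
def SetConvex (I : Set P) : Prop :=
  ∀ ⦃p q r : P⦄, p ∈ I → r ∈ I → p ≤ q → q ≤ r → q ∈ I

/-- Connectedness of a subset: any two points are joined by a zigzag of
comparable elements staying inside the subset. -/
def SetZigzagConn (I : Set P) : Prop :=
  ∀ p ∈ I, ∀ q ∈ I,
    Relation.ReflTransGen (fun a b : P => a ∈ I ∧ b ∈ I ∧ (a ≤ b ∨ b ≤ a)) p q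

/-- An interval of a poset: nonempty, convex and connected. -/
def IsIntervalSet (I : Set P) : Prop :=
  I.Nonempty ∧ SetConvex I ∧ SetZigzagConn I

/-- A path-connected subposet (member of `Con(P)`): nonempty and any two of its
points are joined by a sequence in `I` in which consecutive elements are related
by the covering relation of `P`. -/
def IsPathConnIn (I : Set P) : Prop :=
  I.Nonempty ∧ ∀ p ∈ I, ∀ q ∈ I,
    Relation.ReflTransGen (fun a b : P => a ∈ I ∧ b ∈ I ∧ (a ⋖ b ∨ b ⋖ a)) p q

lemma setConvex_univ : SetConvex (Set.univ : Set P) := by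
  intro p q r _ _ _ _; trivial

end SetNotions

namespace PersMod

variable {𝔽 : Type} [Field 𝔽] {P : Type} [PartialOrder P]

/-- The limit of a persistence module: the module of compatible sections. -/
def sections (M : PersMod 𝔽 P) : Submodule 𝔽 (∀ p, M.V p) where
  carrier := {x | ∀ (p q : P) (h : p ≤ q), M.φ h (x p) = x q}
  add_mem' := by
    intro x y hx hy p q h
    simp only [Pi.add_apply, map_add]
    rw [hx p q h, hy p q h]
  zero_mem' := by intro p q h; simp
  smul_mem' := by
    intro c x hx p q h
    simp only [Pi.smul_apply, map_smul]
    rw [hx p q h]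

/-- The relations defining the colimit of a persistence module. -/
def colimRel (M : PersMod 𝔽 P) : Submodule 𝔽 (DirectSum P fun p => M.V p) :=
  Submodule.span 𝔽 {z | ∃ (p q : P) (h : p ≤ q) (v : M.V p),
    z = DirectSum.lof 𝔽 P (fun p => M.V p) q (M.φ h v)
      - DirectSum.lof 𝔽 P (fun p => M.V p) p v}

/-- The colimit of a persistence module. -/
abbrev colim (M : PersMod 𝔽 P) :=
  (DirectSum P fun p => M.V p) ⧸ M.colimRel

/-- The canonical map `lim M → colim M` factored through the value at `p`,
i.e. `ι_p ∘ π_p`. -/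
def canonicalMapAt (M : PersMod 𝔽 P) (p : P) : M.sections →ₗ[𝔽] M.colim :=
  (M.colimRel.mkQ.comp (DirectSum.lof 𝔽 P (fun q => M.V q) p)).comp
    ((LinearMap.proj p).comp M.sections.subtype)

/-- The rank of the canonical map `lim M → colim M` computed through `p`. -/
def genRankAt (M : PersMod 𝔽 P) (p : P) : ℕ :=
  finrank 𝔽 (LinearMap.range (M.canonicalMapAt p))

/-- The generalized rank of a persistence module over a (connected) poset. -/
def genRank (M : PersMod 𝔽 P) [Nonempty P] : ℕ :=
  M.genRankAt (Classical.arbitrary P)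

/-- Restriction of a persistence module to a subposet. -/
def restrict (M : PersMod 𝔽 P) (I : Set P) : PersMod 𝔽 I where
  V := fun i => M.V i.val
  φ := fun {i j} h => M.φ h
  φ_refl := fun i => M.φ_refl i.val
  φ_comp := fun hpq hqr => M.φ_comp hpq hqr

/-- The generalized rank invariant: the generalized rank of the restriction
of `M` to `I`. -/
def rkInv (M : PersMod 𝔽 P) (I : Set P) : ℕ :=
  if h : I.Nonempty then (M.restrict I).genRankAt ⟨h.choose, h.choose_spec⟩ else 0

/-- Finite direct sums of persistence modules. -/
def dSum {F : Type} [Fintype F] (Ms : F → PersMod 𝔽 P) : PersMod 𝔽 P where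
  V := fun p => ∀ i, (Ms i).V p
  φ := fun {p q} h => LinearMap.pi fun i => ((Ms i).φ h).comp (LinearMap.proj i)
  φ_refl := by
    intro p
    refine LinearMap.ext fun x => funext fun i => ?_
    simp [(Ms i).φ_refl p]
  φ_comp := by
    intro p q r hpq hqr
    refine LinearMap.ext fun x => funext fun i => ?_
    simpa using LinearMap.congr_fun ((Ms i).φ_comp hpq hqr) (x i)

/-- Binary direct sum of persistence modules. -/
def prodMod (M N : PersMod 𝔽 P) : PersMod 𝔽 P where
  V := fun p => M.V p × N.V p
  φ := fun h => (M.φ h).prodMap (N.φ h)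
  φ_refl := by
    intro p
    refine LinearMap.ext fun x => ?_
    simp [M.φ_refl p, N.φ_refl p]
  φ_comp := by
    intro p q r h1 h2
    refine LinearMap.ext fun x => ?_
    have hM := LinearMap.congr_fun (M.φ_comp h1 h2) x.1
    have hN := LinearMap.congr_fun (N.φ_comp h1 h2) x.2
    simp only [LinearMap.comp_apply] at hM hN ⊢
    simp [hM, hN]

/-- The zero persistence module. -/
def IsZero (M : PersMod 𝔽 P) : Prop := ∀ p, Subsingleton (M.V p)

/-- Isomorphism of persistence modules. -/
def Isom (M N : PersMod 𝔽 P) : Prop :=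
  ∃ e : ∀ p, M.V p ≃ₗ[𝔽] N.V p,
    ∀ (p q : P) (h : p ≤ q) (v : M.V p), e q (M.φ h v) = N.φ h (e p v)

/-- Indecomposability of a persistence module. -/
def Indecomposable (M : PersMod 𝔽 P) : Prop :=
  ¬ M.IsZero ∧
    ∀ M₁ M₂ : PersMod 𝔽 P, M.Isom (M₁.prodMod M₂) → M₁.IsZero ∨ M₂.IsZero

end PersMod

section IntervalModule

variable {P : Type} [PartialOrder P]

/-- The fiber of the interval module at `p`: all of `𝔽` if `p ∈ I`, and `0`
otherwise. -/
def fiber (𝔽 : Type) [Field 𝔽] (I : Set P) (p : P) : Submodule 𝔽 𝔽 where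
  carrier := {x | p ∈ I ∨ x = 0}
  zero_mem' := Or.inr rfl
  add_mem' := by
    rintro x y (h | rfl) (h' | rfl)
    · exact Or.inl h
    · exact Or.inl h
    · exact Or.inl h'
    · exact Or.inr (add_zero 0)
  smul_mem' := by
    rintro c x (h | rfl)
    · exact Or.inl h
    · exact Or.inr (smul_zero c)

/-- The interval module `V_I` of a convex subset `I ⊆ P`. -/
def intervalModule (𝔽 : Type) [Field 𝔽] (I : Set P) (hc : SetConvex I) :
    PersMod 𝔽 P where
  V := fun p => fiber 𝔽 I p
  φ := fun {p q} _h =>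
    LinearMap.restrict (if q ∈ I then LinearMap.id else 0)
      (by
        intro x hx
        by_cases hq : q ∈ I
        · rw [if_pos hq]; exact Or.inl hq
        · rw [if_neg hq]; exact Or.inr rfl)
  φ_refl := by
    intro p
    refine LinearMap.ext fun x => Subtype.ext ?_
    rw [LinearMap.restrict_apply]
    by_cases hp : p ∈ I
    · simp [hp]
    · rcases x.2 with h | h
      · exact absurd h hp
      · simp [hp, h]
  φ_comp := by
    intro p q r hpq hqr
    refine LinearMap.ext fun x => Subtype.ext ?_
    simp only [LinearMap.comp_apply, LinearMap.restrict_apply]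
    by_cases hr : r ∈ I <;> by_cases hq : q ∈ I <;> simp [hr, hq]
    rcases x.2 with hp | h0
    · exact absurd (hc hp hr hpq hqr) hq
    · exact h0.symm

end IntervalModule

section Grid

variable {𝔽 : Type} [Field 𝔽]

lemma le_sub_e1 (p : ℤ × ℤ) : ((p.1 - 1, p.2) : ℤ × ℤ) ≤ p :=
  Prod.le_def.mpr ⟨show p.1 - 1 ≤ p.1 by omega, le_rfl⟩

lemma le_sub_e2 (p : ℤ × ℤ) : ((p.1, p.2 - 1) : ℤ × ℤ) ≤ p :=
  Prod.le_def.mpr ⟨le_rfl, show p.2 - 1 ≤ p.2 by omega⟩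

lemma le_sub_e12_e1 (p : ℤ × ℤ) : ((p.1 - 1, p.2 - 1) : ℤ × ℤ) ≤ (p.1 - 1, p.2) :=
  Prod.le_def.mpr ⟨le_rfl, show p.2 - 1 ≤ p.2 by omega⟩

lemma le_sub_e12_e2 (p : ℤ × ℤ) : ((p.1 - 1, p.2 - 1) : ℤ × ℤ) ≤ (p.1, p.2 - 1) :=
  Prod.le_def.mpr ⟨show p.1 - 1 ≤ p.1 by omega, le_rfl⟩

/-- The `0`-th bigraded Betti number of `M : ℤ² → vec` at `p`, defined via the
Koszul complex as the dimension of the cokernel of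
`M(p-e₁) ⊕ M(p-e₂) → M(p)`. -/
def beta0 (M : PersMod 𝔽 (ℤ × ℤ)) (p : ℤ × ℤ) : ℕ :=
  finrank 𝔽
    (M.V p ⧸ LinearMap.range ((M.φ (le_sub_e1 p)).coprod (M.φ (le_sub_e2 p))))

/-- The `2`-nd bigraded Betti number of `M : ℤ² → vec` at `p`, defined via the
Koszul complex as the dimension of the intersection of the kernels of the two
structure maps out of `M(p-e₁-e₂)`. -/
def beta2 (M : PersMod 𝔽 (ℤ × ℤ)) (p : ℤ × ℤ) : ℕ :=
  finrank 𝔽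
    ↥(LinearMap.ker (M.φ (le_sub_e12_e1 p)) ⊓ LinearMap.ker (M.φ (le_sub_e12_e2 p)))

/-- The `1`-st bigraded Betti number of `M : ℤ² → vec` at `p`, via the Koszul
complex characterization. -/
def beta1 (M : PersMod 𝔽 (ℤ × ℤ)) (p : ℤ × ℤ) : ℤ :=
  (beta0 M p : ℤ) + (beta2 M p : ℤ)
    - (finrank 𝔽 (M.V p) : ℤ) + (finrank 𝔽 (M.V (p.1 - 1, p.2)) : ℤ)
    + (finrank 𝔽 (M.V (p.1, p.2 - 1)) : ℤ) - (finrank 𝔽 (M.V (p.1 - 1, p.2 - 1)) : ℤ)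

/-- The maximal element of the grid `[m] × [n]` below a point `p ≥ (0,0)` of `ℤ²`. -/
def clamp (m n : ℕ) (p : ℤ × ℤ) : Fin (m + 1) × Fin (n + 1) :=
  (⟨min p.1.toNat m, Nat.lt_succ_of_le (min_le_right _ _)⟩,
   ⟨min p.2.toNat n, Nat.lt_succ_of_le (min_le_right _ _)⟩)

lemma clamp_mono {m n : ℕ} {p q : ℤ × ℤ} (h : p ≤ q) : clamp m n p ≤ clamp m n q := by
  obtain ⟨h1, h2⟩ := Prod.le_def.mp h
  refine Prod.le_def.mpr ⟨?_, ?_⟩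
  · exact Fin.mk_le_mk.mpr (min_le_min (Int.toNat_le_toNat h1) le_rfl)
  · exact Fin.mk_le_mk.mpr (min_le_min (Int.toNat_le_toNat h2) le_rfl)

/-- `M : ℤ² → vec` is encoded by `M' : [m] × [n] → vec`. -/
def IsEncodedBy {m n : ℕ} (M : PersMod 𝔽 (ℤ × ℤ))
    (M' : PersMod 𝔽 (Fin (m + 1) × Fin (n + 1))) : Prop :=
  (∀ p : ℤ × ℤ, ¬(0 ≤ p.1 ∧ 0 ≤ p.2) → Subsingleton (M.V p)) ∧
  ∃ e : ∀ p : ℤ × ℤ, 0 ≤ p.1 → 0 ≤ p.2 → (M.V p ≃ₗ[𝔽] M'.V (clamp m n p)),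
    ∀ (p q : ℤ × ℤ) (hp1 : 0 ≤ p.1) (hp2 : 0 ≤ p.2) (hq1 : 0 ≤ q.1) (hq2 : 0 ≤ q.2)
      (hpq : p ≤ q) (v : M.V p),
      e q hq1 hq2 (M.φ hpq v) = M'.φ (clamp_mono hpq) (e p hp1 hp2 v)

/-- A point `a ∈ ℤ²` "belongs" to `J ⊆ [m] × [n]` if it is a grid point lying in `J`. -/
def gridPt {m n : ℕ} (a : ℤ × ℤ) (J : Set (Fin (m + 1) × Fin (n + 1))) : Prop :=
  ∃ x ∈ J, (((x.1 : ℕ) : ℤ), ((x.2 : ℕ) : ℤ)) = a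

end Grid

/-!
Restricting to `I` turns the decomposition of `M` into one of `M|_I` into interval modules of the
convex sets `Js i ∩ I`, and the covering paths make `I` zigzag connected. Over a connected poset
the class of a section in the colimit can be read off at any point, so the part of a section
living on a summand that misses some point of `I` vanishes in the colimit. On the remaining
summands, those with `I ⊆ Js i`, all structure maps are identities, so summing the values of each
of them is a well-defined map from the colimit to `𝔽^{i | I ⊆ Js i}`. It is injective on the image
of the canonical map and the constant sections show that the composite is onto.
-/

theorem LinearMap.finrank_range_comp_of_ker_le {R V W Z : Type*} [Ring R]
    [AddCommGroup V] [Module R V] [AddCommGroup W] [Module R W] [AddCommGroup Z] [Module R Z]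
    {f : V →ₗ[R] W} {g : W →ₗ[R] Z} (h : LinearMap.ker (g ∘ₗ f) ≤ LinearMap.ker f) :
    finrank R (LinearMap.range (g ∘ₗ f)) = finrank R (LinearMap.range f) := by
  rw [← (g ∘ₗ f).quotKerEquivRange.finrank_eq, ← f.quotKerEquivRange.finrank_eq,
    le_antisymm h (LinearMap.ker_le_ker_comp f g)]

section SetNotions

variable {P : Type} [PartialOrder P]

theorem SetConvex.preimage_val {J : Set P} (hJ : SetConvex J) (I : Set P) :
    SetConvex (Subtype.val ⁻¹' J : Set I) :=
  fun _ _ _ hp hr hpq hqr => hJ hp hr hpq hqr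

theorem IsPathConnIn.zigzagConnected {I : Set P} (hI : IsPathConnIn I) : ZigzagConnected I := by
  rintro ⟨p, hp⟩ ⟨q, hq⟩
  suffices ∀ q, Relation.ReflTransGen (fun a b : P => a ∈ I ∧ b ∈ I ∧ (a ⋖ b ∨ b ⋖ a)) p q →
      ∀ hq : q ∈ I, Relation.ReflTransGen (fun a b : I => a ≤ b ∨ b ≤ a) ⟨p, hp⟩ ⟨q, hq⟩ from
    this q (hI.2 p hp q hq) hq
  intro q hpq
  induction hpq with
  | refl => exact fun _ => .refl
  | tail _ hbc ih => exact fun _ => (ih hbc.1).tail (hbc.2.2.imp (·.le) (·.le))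

end SetNotions

section IntervalModule

theorem mem_fiber {𝔽 : Type} [Field 𝔽] {Q : Type} {J : Set Q} {p : Q} {x : 𝔽} :
    x ∈ fiber 𝔽 J p ↔ p ∈ J ∨ x = 0 :=
  Iff.rfl

theorem fiber_eq_zero_of_notMem {𝔽 : Type} [Field 𝔽] {Q : Type} {J : Set Q} {p : Q} (hp : p ∉ J)
    (x : fiber 𝔽 J p) : x = 0 :=
  Subtype.ext ((mem_fiber.1 x.2).resolve_left hp)

variable {𝔽 : Type} [Field 𝔽] {Q : Type} [PartialOrder Q]

theorem intervalModule_φ_coe {J : Set Q} (hc : SetConvex J) {p q : Q} (h : p ≤ q)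
    (x : (intervalModule 𝔽 J hc).V p) :
    Subtype.val ((intervalModule 𝔽 J hc).φ h x) = if q ∈ J then Subtype.val x else 0 := by
  show (if q ∈ J then LinearMap.id else (0 : 𝔽 →ₗ[𝔽] 𝔽)) x.1 = _
  split_ifs <;> rfl

end IntervalModule

namespace PersMod

variable {𝔽 : Type} [Field 𝔽] {Q : Type} [PartialOrder Q]

theorem canonicalMapAt_apply (M : PersMod 𝔽 Q) (p : Q) (x : M.sections) :
    M.canonicalMapAt p x = M.colimRel.mkQ (DirectSum.lof 𝔽 Q (fun q => M.V q) p (x.1 p)) :=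
  rfl

theorem lof_φ_sub_lof_mem_colimRel (M : PersMod 𝔽 Q) {p q : Q} (h : p ≤ q) (v : M.V p) :
    DirectSum.lof 𝔽 Q (fun q => M.V q) q (M.φ h v) - DirectSum.lof 𝔽 Q (fun q => M.V q) p v ∈
      M.colimRel :=
  Submodule.subset_span ⟨p, q, h, v, rfl⟩

theorem canonicalMapAt_eq_of_le (M : PersMod 𝔽 Q) {p q : Q} (h : p ≤ q) :
    M.canonicalMapAt p = M.canonicalMapAt q := by
  refine LinearMap.ext fun x => ?_
  rw [canonicalMapAt_apply, canonicalMapAt_apply, ← x.2 p q h]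
  exact ((Submodule.Quotient.eq _).2 (M.lof_φ_sub_lof_mem_colimRel h (x.1 p))).symm

theorem canonicalMapAt_eq_of_reflTransGen (M : PersMod 𝔽 Q) {p q : Q}
    (h : Relation.ReflTransGen (fun a b : Q => a ≤ b ∨ b ≤ a) p q) :
    M.canonicalMapAt p = M.canonicalMapAt q := by
  induction h with
  | refl => rfl
  | tail _ hbc ih =>
    exact ih.trans (hbc.elim M.canonicalMapAt_eq_of_le fun h => (M.canonicalMapAt_eq_of_le h).symm)

theorem canonicalMapAt_eq_zero_of_apply_eq_zero (M : PersMod 𝔽 Q) (hQ : ZigzagConnected Q)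
    {x : M.sections} {q : Q} (hx : x.1 q = 0) (p : Q) : M.canonicalMapAt p x = 0 := by
  rw [M.canonicalMapAt_eq_of_reflTransGen (hQ p q), canonicalMapAt_apply, hx, map_zero, map_zero]

theorem Isom.restrict {M N : PersMod 𝔽 Q} (h : M.Isom N) (I : Set Q) :
    (M.restrict I).Isom (N.restrict I) := by
  obtain ⟨e, he⟩ := h
  exact ⟨fun p => e p.1, fun p q hpq v => he p.1 q.1 hpq v⟩

section Naturality

variable {M N : PersMod 𝔽 Q}

def IsNatural (f : ∀ p, M.V p →ₗ[𝔽] N.V p) : Prop :=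
  ∀ (p q : Q) (h : p ≤ q) (v : M.V p), f q (M.φ h v) = N.φ h (f p v)

theorem isNatural_symm {e : ∀ p, M.V p ≃ₗ[𝔽] N.V p}
    (he : IsNatural fun p => (e p : M.V p →ₗ[𝔽] N.V p)) :
    IsNatural fun p => ((e p).symm : N.V p →ₗ[𝔽] M.V p) := by
  intro p q h v
  apply (e q).injective
  simpa using (he p q h ((e p).symm v)).symm

variable {f : ∀ p, M.V p →ₗ[𝔽] N.V p}

def sectionsMap (hf : IsNatural f) : M.sections →ₗ[𝔽] N.sections :=
  (LinearMap.pi fun p => f p ∘ₗ LinearMap.proj p).restrict fun x hx p q h =>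
    (hf p q h (x p)).symm.trans (congrArg (f q) (hx p q h))

@[simp]
theorem sectionsMap_apply_coe (hf : IsNatural f) (x : M.sections) (p : Q) :
    (sectionsMap hf x).1 p = f p (x.1 p) :=
  rfl

theorem sectionsMap_leftInverse {g : ∀ p, N.V p →ₗ[𝔽] M.V p} (hf : IsNatural f)
    (hg : IsNatural g) (hgf : ∀ p, Function.LeftInverse (g p) (f p)) :
    Function.LeftInverse (sectionsMap hg) (sectionsMap hf) :=
  fun x => Subtype.ext (funext fun p => hgf p (x.1 p))

def colimMap (hf : IsNatural f) : M.colim →ₗ[𝔽] N.colim :=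
  M.colimRel.mapQ N.colimRel (DirectSum.lmap f) <| by
    rw [colimRel, Submodule.span_le]
    rintro _ ⟨p, q, h, v, rfl⟩
    simpa [hf p q h v] using N.lof_φ_sub_lof_mem_colimRel h (f p v)

theorem colimMap_comp_canonicalMapAt (hf : IsNatural f) (p : Q) :
    colimMap hf ∘ₗ M.canonicalMapAt p = N.canonicalMapAt p ∘ₗ sectionsMap hf := by
  refine LinearMap.ext fun x => ?_
  simp [colimMap, canonicalMapAt_apply]

theorem genRankAt_eq_of_isom (h : M.Isom N) (p : Q) : M.genRankAt p = N.genRankAt p := by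
  obtain ⟨e, he⟩ := h
  have he' := isNatural_symm (e := e) he
  have hsec := sectionsMap_leftInverse he he' fun p => (e p).symm_apply_apply
  have hsurj := (sectionsMap_leftInverse he' he fun p => (e p).apply_symm_apply).surjective
  have hker : LinearMap.ker (colimMap he ∘ₗ M.canonicalMapAt p) ≤
      LinearMap.ker (M.canonicalMapAt p) := by
    intro x hx
    rw [LinearMap.mem_ker] at hx ⊢
    calc M.canonicalMapAt p x = M.canonicalMapAt p (sectionsMap he' (sectionsMap he x)) := by
          rw [hsec x]
      _ = colimMap he' (N.canonicalMapAt p (sectionsMap he x)) :=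
          (LinearMap.congr_fun (colimMap_comp_canonicalMapAt he' p) _).symm
      _ = colimMap he' (colimMap he (M.canonicalMapAt p x)) :=
          congrArg _ (LinearMap.congr_fun (colimMap_comp_canonicalMapAt he p) x).symm
      _ = 0 := by rw [← LinearMap.comp_apply (colimMap he), hx, map_zero]
  rw [genRankAt, genRankAt, ← LinearMap.finrank_range_comp_of_ker_le hker,
    colimMap_comp_canonicalMapAt he p, LinearMap.range_comp_of_range_eq_top _
      (LinearMap.range_eq_top.2 hsurj)]

end Naturality

section DirectSum

variable {F : Type} [Fintype F] (Ms : F → PersMod 𝔽 Q)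

theorem dSum_φ_apply {p q : Q} (h : p ≤ q) (v : (dSum Ms).V p) (i : F) :
    (dSum Ms).φ h v i = (Ms i).φ h (v i) :=
  rfl

theorem dSum_φ_single {p q : Q} (h : p ≤ q) (i : F) (v : (Ms i).V p) :
    (dSum Ms).φ h (Pi.single i v : (dSum Ms).V p) = Pi.single i ((Ms i).φ h v) :=
  funext (Pi.apply_single (fun j => (Ms j).φ h) (fun _ => map_zero _) i v)

def sectionsComponent (x : (dSum Ms).sections) (i : F) : (dSum Ms).sections :=
  ⟨fun p => Pi.single i (x.1 p i), fun p q h => by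
    show (dSum Ms).φ h (Pi.single i (x.1 p i) : (dSum Ms).V p) = Pi.single i (x.1 q i)
    rw [dSum_φ_single, ← x.2 p q h, dSum_φ_apply]⟩

theorem sum_sectionsComponent (x : (dSum Ms).sections) : ∑ i, sectionsComponent Ms x i = x := by
  refine Subtype.ext (funext fun p => ?_)
  rw [Submodule.coe_sum, Finset.sum_apply]
  exact Finset.univ_sum_single (x.1 p)

theorem sectionsComponent_apply_eq_zero {x : (dSum Ms).sections} {i : F} {q : Q}
    (hx : x.1 q i = 0) : (sectionsComponent Ms x i).1 q = 0 := by
  show (Pi.single i (x.1 q i) : (dSum Ms).V q) = 0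
  rw [hx]
  exact Pi.single_zero i

end DirectSum

section IntervalDecomposable

variable {F : Type} [Fintype F] (Ks : F → Set Q) (hc : ∀ i, SetConvex (Ks i))

variable (𝔽) in
def colimFullCoord :
    (dSum fun i => intervalModule 𝔽 (Ks i) (hc i)).colim →ₗ[𝔽] ({i // Ks i = Set.univ} → 𝔽) :=
  Submodule.liftQ _ (DirectSum.toModule 𝔽 Q _ fun q =>
      LinearMap.pi fun i => (fiber 𝔽 (Ks i.1) q).subtype ∘ₗ LinearMap.proj i.1) <| by
    rw [colimRel, Submodule.span_le]
    rintro _ ⟨p, q, h, v, rfl⟩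
    ext i
    simp only [map_sub, DirectSum.toModule_lof]
    show ((dSum _).φ h v i.1).val - (v i.1).val = 0
    rw [dSum_φ_apply, intervalModule_φ_coe, if_pos (Set.eq_univ_iff_forall.1 i.2 q), sub_self]

theorem colimFullCoord_canonicalMapAt (p : Q)
    (x : (dSum fun i => intervalModule 𝔽 (Ks i) (hc i)).sections) (i : {i // Ks i = Set.univ}) :
    colimFullCoord 𝔽 Ks hc ((dSum _).canonicalMapAt p x) i = (x.1 p i.1).val := by
  simp only [colimFullCoord, canonicalMapAt_apply, Submodule.mkQ_apply, Submodule.liftQ_apply,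
    DirectSum.toModule_lof]
  rfl

theorem canonicalMapAt_eq_zero_of_colimFullCoord_eq_zero (hQ : ZigzagConnected Q) (p : Q)
    (x : (dSum fun i => intervalModule 𝔽 (Ks i) (hc i)).sections)
    (hx : colimFullCoord 𝔽 Ks hc ((dSum _).canonicalMapAt p x) = 0) :
    (dSum _).canonicalMapAt p x = 0 := by
  rw [← sum_sectionsComponent _ x, map_sum]
  refine Finset.sum_eq_zero fun i _ => ?_
  by_cases hi : Ks i = Set.univ
  · refine canonicalMapAt_eq_zero_of_apply_eq_zero _ hQ (q := p) ?_ p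
    have hxi : x.1 p i = 0 := Subtype.ext
      ((colimFullCoord_canonicalMapAt Ks hc p x ⟨i, hi⟩).symm.trans (congr_fun hx ⟨i, hi⟩))
    exact sectionsComponent_apply_eq_zero _ hxi
  · obtain ⟨q, hq⟩ := (Set.ne_univ_iff_exists_notMem _).1 hi
    refine canonicalMapAt_eq_zero_of_apply_eq_zero _ hQ (q := q) ?_ p
    exact sectionsComponent_apply_eq_zero _ (fiber_eq_zero_of_notMem hq (x.1 q i))

def fullSection (c : {i // Ks i = Set.univ} → 𝔽) :
    (dSum fun i => intervalModule 𝔽 (Ks i) (hc i)).sections :=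
  ⟨fun p i => ⟨if hi : Ks i = Set.univ then c ⟨i, hi⟩ else 0,
      mem_fiber.2 ((em _).imp (fun hi => Set.eq_univ_iff_forall.1 hi p) fun hi => dif_neg hi)⟩, by
    intro p q h
    funext i
    apply Subtype.ext
    refine (intervalModule_φ_coe (hc i) h _).trans ?_
    by_cases hi : Ks i = Set.univ <;> simp [hi]⟩

theorem colimFullCoord_comp_canonicalMapAt_surjective (p : Q) :
    Function.Surjective (colimFullCoord 𝔽 Ks hc ∘ₗ (dSum _).canonicalMapAt p) := fun c =>
  ⟨fullSection Ks hc c, funext fun i => by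
    simp [colimFullCoord_canonicalMapAt, fullSection, i.2]⟩

theorem genRankAt_dSum_intervalModule (hQ : ZigzagConnected Q) (p : Q) :
    (dSum fun i => intervalModule 𝔽 (Ks i) (hc i)).genRankAt p =
      Nat.card {i // Ks i = Set.univ} := by
  rw [genRankAt, ← LinearMap.finrank_range_comp_of_ker_le (g := colimFullCoord 𝔽 Ks hc)
    fun x hx => canonicalMapAt_eq_zero_of_colimFullCoord_eq_zero Ks hc hQ p x hx,
    LinearMap.range_eq_top.2 (colimFullCoord_comp_canonicalMapAt_surjective Ks hc p),
    finrank_top, Module.finrank_fintype_fun_eq_card, Nat.card_eq_fintype_card]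

theorem restrict_dSum_intervalModule (I : Set Q) :
    (dSum fun i => intervalModule 𝔽 (Ks i) (hc i)).restrict I =
      dSum fun i => intervalModule 𝔽 (Subtype.val ⁻¹' Ks i : Set I) ((hc i).preimage_val I) :=
  rfl

end IntervalDecomposable

end PersMod

theorem rkInv_eq_card_of_intervalDecomposable_general (𝔽 : Type) [Field 𝔽] (P : Type)
    [PartialOrder P] (M : PersMod 𝔽 P)
    (F : Type) [Fintype F] (Js : F → Set P) (hJ : ∀ i, IsIntervalSet (Js i))
    (hiso : M.Isom (PersMod.dSum fun i => intervalModule 𝔽 (Js i) (hJ i).2.1))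
    (I : Set P) (hI : IsPathConnIn I) :
    M.rkInv I = Nat.card {i : F // I ⊆ Js i} := by
  rw [PersMod.rkInv, dif_pos hI.1, PersMod.genRankAt_eq_of_isom (hiso.restrict I),
    PersMod.restrict_dSum_intervalModule,
    PersMod.genRankAt_dSum_intervalModule _ _ hI.zigzagConnected]
  exact Nat.card_congr <| Equiv.subtypeEquivRight fun i => by
    rw [Set.preimage_eq_univ_iff, Subtype.range_coe]

/-- If `M` is interval decomposable, `M ≅ ⊕_{i ∈ F} V_{J_i}`,
then for every path-connected subposet `I ∈ Con(P)`, the generalized rank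
invariant `rk(M)(I)` equals the number of indices `i` with `J_i ⊇ I`. -/
theorem rkInv_eq_card_of_intervalDecomposable (𝔽 : Type) [Field 𝔽] (P : Type)
    [PartialOrder P] [Fintype P] (hconn : ZigzagConnected P) (M : PersMod 𝔽 P)
    (F : Type) [Fintype F] (Js : F → Set P) (hJ : ∀ i, IsIntervalSet (Js i))
    (hiso : M.Isom (PersMod.dSum fun i => intervalModule 𝔽 (Js i) (hJ i).2.1))
    (I : Set P) (hI : IsPathConnIn I) :
    M.rkInv I = Nat.card {i : F // I ⊆ Js i} :=
  rkInv_eq_card_of_intervalDecomposable_general 𝔽 P M F Js hJ hiso I hI
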